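/- For all words u, v over a finite alphabet and letters a, b, r(u·a·v, b) ≤ 1 + r(u·v, b) and ℓ(b, u·a·v) ≤ 1 + ℓ(b, u·v). -/

import Mathlib

variable {A : Type*}

/-- Simon's congruence of order `k`: `u` and `v` have the same subwords of length ≤ k. -/
def SimonCong (k : ℕ) (u v : List A) : Prop :=
  ∀ s : List A, s.length ≤ k → (s.Sublist u ↔ s.Sublist v)

/-- Subword distance `δ(u,v) = sup {k | u ∼ₖ v} ∈ ℕ∞`. -/
noncomputable def sdelta (u v : List A) : ℕ∞ :=
  sSup {d : ℕ∞ | ∃ k : ℕ, d = k ∧ SimonCong k u v}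

/-- Right side distance `r(u,t) = δ(u, u·t)`. -/
noncomputable def rdist (u t : List A) : ℕ∞ := sdelta u (u ++ t)

/-- Left side distance `ℓ(t,u) = δ(t·u, u)`. -/
noncomputable def ldist (t u : List A) : ℕ∞ := sdelta (t ++ u) u

/-- Piecewise complexity `h(u)`: least `n` such that any `v` with `u ∼ₙ v` equals `u`. -/
noncomputable def pcHeight (u : List A) : ℕ :=
  sInf {n : ℕ | ∀ v : List A, SimonCong n u v → v = u}

/-- `u` is `m`-reduced: no strict subword of `u` is `∼ₘ`-equivalent to `u`. -/
def Reduced (m : ℕ) (u : List A) : Prop :=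
  ∀ u' : List A, u'.Sublist u → u' ≠ u → ¬ SimonCong m u u'

/-- Piecewise minimality index `ρ(u)`: least `m` such that `u` is `m`-reduced. -/
noncomputable def pcRho (u : List A) : ℕ := sInf {m : ℕ | Reduced m u}

/-- An `A`-arch: contains every letter of `A` but no strict prefix does. -/
def IsArch (A : Type*) [Fintype A] (s : List A) : Prop :=
  (∀ a : A, a ∈ s) ∧ ∀ t : List A, t <+: s → t ≠ s → ∃ a : A, a ∉ t

/-- The infinite periodic word `u^ω`. -/
def omegaWord (u : List A) (hu : u ≠ []) (i : ℕ) : A :=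
  u.get ⟨i % u.length, Nat.mod_lt i (List.length_pos_iff.mpr hu)⟩

/-- The arch-jumping function `α` on `u^ω`: `α(i)` is the least `j > i` such that
every letter of `A` occurs among positions `i, …, j-1` of `u^ω`. -/
noncomputable def archJump (u : List A) (hu : u ≠ []) (i : ℕ) : ℕ :=
  sInf {j : ℕ | i < j ∧ ∀ a : A, ∃ m : ℕ, i ≤ m ∧ m < j ∧ omegaWord u hu m = a}

/-- `p` is an arch-period of `u` starting at `i`. -/
def IsArchPeriodAt (u : List A) (hu : u ≠ []) (i p : ℕ) : Prop :=
  0 < p ∧ ∃ k : ℕ, (archJump u hu)^[k + p] i ≡ (archJump u hu)^[k] i [MOD u.length]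

/-- The arch-period of `u`: the least arch-period starting at 0. -/
noncomputable def archPeriod (u : List A) (hu : u ≠ []) : ℕ :=
  sInf {p : ℕ | IsArchPeriodAt u hu 0 p}

/-- `K_u`: the least `k` with `α^{k+p}(0) ≡ α^k(0) (mod L)`. -/
noncomputable def archTransientIndex (u : List A) (hu : u ≠ []) : ℕ :=
  sInf {k : ℕ |
    (archJump u hu)^[k + archPeriod u hu] 0 ≡ (archJump u hu)^[k] 0 [MOD u.length]}

/-- The transient `T_u = α^{K_u}(0)`. -/
noncomputable def archTransient (u : List A) (hu : u ≠ []) : ℕ :=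
  (archJump u hu)^[archTransientIndex u hu] 0

/-- The span `Δ_u = α^{K_u+p_u}(0) − α^{K_u}(0)`. -/
noncomputable def archSpan (u : List A) (hu : u ≠ []) : ℕ :=
  (archJump u hu)^[archTransientIndex u hu + archPeriod u hu] 0 - archTransient u hu

/-- `u^n`: the `n`-fold concatenation of `u`. -/
def listPow (u : List A) (n : ℕ) : List A := (List.replicate n u).flatten

/-!
If `s b ≼ u v b` with `|s b| ≤ k`, split `s = p q` greedily, with `p ≼ u` as long as possible
and `q ≼ v`. The word `p a q b` has length at most `k + 1` and embeds in `u a v b`, hence in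
`u a v` when `u a v ∼_{k+1} u a v b`. By the greedy choice of `p`, the first letter of `q b`
cannot be matched inside `u a` after `p a` unless `q` is empty, so either `q b ≼ v` or `p b ≼ u`;
either way `s b ≼ u v`. Thus `u a v ∼_{k+1} u a v b` implies `u v ∼_k u v b`, and the bound on `ℓ`
is the bound on `r` for the reversed words.
-/

namespace List

theorem sublist_or_exists_append_singleton_sublist {p r u w : List A}
    (h : (p ++ r).Sublist (u ++ w)) :
    r.Sublist w ∨ ∃ c r', r = c :: r' ∧ (p ++ [c]).Sublist u := by
  obtain ⟨x, y, hxy, hx, hy⟩ := sublist_append_iff.1 h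
  rcases append_eq_append_iff.1 hxy with ⟨_ | ⟨c, m⟩, rfl, rfl⟩ | ⟨m, rfl, rfl⟩
  · exact .inl (by simpa using hy)
  · exact .inr ⟨c, m ++ y, rfl, (by simp : (p ++ [c]).Sublist (p ++ c :: m)).trans hx⟩
  · exact .inl ((sublist_append_right m r).trans hy)

theorem sublist_of_append_pair_sublist_append_singleton {p u : List A} {a c : A}
    (h : (p ++ [a, c]).Sublist (u ++ [a])) : (p ++ [c]).Sublist u := by
  rw [← reverse_sublist] at h ⊢
  simp only [reverse_append, reverse_cons, reverse_nil, nil_append, cons_append] at h ⊢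
  rcases sublist_cons_iff.1 h with h | ⟨r, hr, hrs⟩
  · exact (cons_sublist_cons.2 (sublist_cons_self a _)).trans h
  · obtain ⟨rfl, rfl⟩ := cons_eq_cons.1 hr
    exact hrs

theorem exists_greedy_split {s u v : List A} (h : s.Sublist (u ++ v)) :
    ∃ p q, s = p ++ q ∧ p.Sublist u ∧ q.Sublist v ∧
      ∀ c q', q = c :: q' → ¬ (p ++ [c]).Sublist u := by
  classical
  let P n := (s.take n).Sublist u ∧ (s.drop n).Sublist v
  obtain ⟨x, y, hs, hx, hy⟩ := sublist_append_iff.1 h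
  have hP : P x.length := by subst hs; simpa [P] using ⟨hx, hy⟩
  have hle : x.length ≤ s.length := by simp [hs]
  let n := Nat.findGreatest P s.length
  obtain ⟨hpu, hqv⟩ : P n := Nat.findGreatest_spec hle hP
  refine ⟨_, _, (take_append_drop n s).symm, hpu, hqv, fun c q' hq hc => ?_⟩
  have hlen : n + 1 ≤ s.length := by
    have := congrArg length hq
    simp only [length_drop, length_cons] at this
    omega
  have htake : s.take (n + 1) = s.take n ++ [c] := by rw [take_add, hq]; rfl
  have hdrop : s.drop (n + 1) = q' := by rw [← drop_drop, hq]; rfl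
  have := Nat.le_findGreatest (P := P) hlen
    ⟨htake ▸ hc, hdrop ▸ (sublist_cons_self c q').trans (hq ▸ hqv)⟩
  omega

end List

theorem SimonCong.symm {k : ℕ} {u v : List A} (h : SimonCong k u v) : SimonCong k v u :=
  fun s hs => (h s hs).symm

theorem SimonCong.reverse {k : ℕ} {u v : List A} (h : SimonCong k u v) :
    SimonCong k u.reverse v.reverse := fun s hs => by
  simpa only [List.sublist_reverse_iff] using h s.reverse (by simpa using hs)

theorem simonCong_append_singleton_of_insert {k : ℕ} {u v : List A} {a b : A}
    (H : SimonCong (k + 1) (u ++ [a] ++ v) (u ++ [a] ++ v ++ [b])) :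
    SimonCong k (u ++ v) (u ++ v ++ [b]) := by
  intro s hs
  refine ⟨fun h => h.trans (List.sublist_append_left _ _), fun hsb => ?_⟩
  obtain ⟨s', y, rfl, hs', hy⟩ := List.sublist_append_iff.1 hsb
  rcases List.sublist_singleton.1 hy with rfl | rfl
  · simpa using hs'
  obtain ⟨p, q, rfl, hpu, hqv, hmax⟩ := List.exists_greedy_split hs'
  have hlen : (p ++ [a] ++ (q ++ [b])).length ≤ k + 1 := by simp at hs ⊢; omega
  have hemb : (p ++ [a] ++ (q ++ [b])).Sublist (u ++ [a] ++ v) := by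
    refine (H _ hlen).2 ?_
    simpa only [List.append_assoc] using
      hpu.append ((List.Sublist.refl [a]).append (hqv.append (List.Sublist.refl [b])))
  rcases List.sublist_or_exists_append_singleton_sublist hemb with hqb | ⟨c, r, hcr, hpac⟩
  · simpa only [List.append_assoc] using hpu.append hqb
  have hpc : (p ++ [c]).Sublist u :=
    List.sublist_of_append_pair_sublist_append_singleton (a := a) (by simpa using hpac)
  cases q with
  | nil =>
    obtain ⟨rfl, -⟩ := List.cons_eq_cons.1 hcr
    simpa using hpc.trans (List.sublist_append_left u v)
  | cons d q' =>
    obtain ⟨rfl, -⟩ := List.cons_eq_cons.1 hcr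
    exact absurd hpc (hmax d q' rfl)

theorem sdelta_le_one_add_of_simonCong_succ {x y x' y' : List A}
    (h : ∀ k, SimonCong (k + 1) x y → SimonCong k x' y') :
    sdelta x y ≤ 1 + sdelta x' y' := by
  refine sSup_le ?_
  rintro _ ⟨_ | k, rfl, hk⟩
  · simp
  · calc ((k + 1 : ℕ) : ℕ∞) = 1 + k := by push_cast; ring
      _ ≤ 1 + sdelta x' y' := by gcongr; exact le_sSup ⟨k, rfl, h k hk⟩

theorem stmt11_general {A : Type*} (u v : List A) (a b : A) :
    rdist (u ++ [a] ++ v) [b] ≤ 1 + rdist (u ++ v) [b] ∧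
    ldist [b] (u ++ [a] ++ v) ≤ 1 + ldist [b] (u ++ v) := by
  refine ⟨sdelta_le_one_add_of_simonCong_succ fun k => simonCong_append_singleton_of_insert,
    sdelta_le_one_add_of_simonCong_succ fun k hk => ?_⟩
  have hrev := simonCong_append_singleton_of_insert (u := v.reverse) (v := u.reverse) (a := a)
    (b := b) (by simpa using hk.symm.reverse)
  simpa using hrev.reverse.symm

/-- inserting a letter increases `r` and `ℓ` by at most one. -/
theorem stmt11 {A : Type*} [Fintype A] (u v : List A) (a b : A) :
    rdist (u ++ [a] ++ v) [b] ≤ 1 + rdist (u ++ v) [b] ∧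
    ldist [b] (u ++ [a] ++ v) ≤ 1 + ldist [b] (u ++ v) :=
  stmt11_general u v a b
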